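/- arXiv:2402.07942 — 4 statements merged into one kernel-verified Lean document; each statement's English description precedes it below -/
import Mathlib

section
/- The root quotient γ = α/β, where α = -12 + 4i√119 and β = -12 - 4i√119 are the roots of x² + 24x + 2¹¹, is not a root of unity. (Note τ(2) = -24, so α, β are the roots of x² - τ(2)x + 2¹¹.) -/
open Complex

/-- The roots α = -12 + 4i√119, β = -12 - 4i√119 of x² + 24x + 2¹¹
(i.e. of x² - τ(2)x + 2¹¹ with τ(2) = -24) have ratio γ = α/β which is not a root of unity. -/
theorem stmt0 :
    let α : ℂ := -12 + 4 * Complex.I * (Real.sqrt 119 : ℂ)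
    let β : ℂ := -12 - 4 * Complex.I * (Real.sqrt 119 : ℂ)
    α ^ 2 + 24 * α + 2 ^ 11 = 0 ∧ β ^ 2 + 24 * β + 2 ^ 11 = 0 ∧
      ∀ n : ℕ, 0 < n → (α / β) ^ n ≠ 1 := by
  intro α β
  have hs : (Real.sqrt 119 : ℂ) ^ 2 = 119 := by
    rw [← Complex.ofReal_pow, Real.sq_sqrt (by norm_num : (119:ℝ) ≥ 0)]
    norm_num
  have hI : (Complex.I) ^ 2 = -1 := Complex.I_sq
  have h1 : α ^ 2 + 24 * α + 2 ^ 11 = 0 := by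
    simp only [α]
    linear_combination (-16 : ℂ) * hs + 16 * (Real.sqrt 119 : ℂ)^2 * hI
  have h2 : β ^ 2 + 24 * β + 2 ^ 11 = 0 := by
    simp only [β]
    linear_combination (-16 : ℂ) * hs + 16 * (Real.sqrt 119 : ℂ)^2 * hI
  refine ⟨h1, h2, ?_⟩
  intro n hn h
  have hab : α * β = 2048 := by
    simp only [α, β]
    linear_combination (16 : ℂ) * hs - 16 * (Real.sqrt 119 : ℂ)^2 * hI
  have hβ : β ≠ 0 := by
    intro h0; rw [h0, mul_zero] at hab; norm_num at hab
  have hα : α ≠ 0 := by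
    intro h0; rw [h0, zero_mul] at hab; norm_num at hab
  have hsum : α + β = -24 := by simp only [α, β]; ring
  set γ : ℂ := α / β with hγ
  have hγ0 : γ ≠ 0 := div_ne_zero hα hβ
  have hint : IsIntegral ℤ γ := by
    refine ⟨Polynomial.X ^ n - 1, ?_, ?_⟩
    · simpa using Polynomial.monic_X_pow_sub_C (1 : ℤ) hn.ne'
    · simp [Polynomial.eval₂_sub, h]
  have hpow : γ ^ (n - 1) = γ⁻¹ := by
    refine eq_inv_of_mul_eq_one_left ?_
    rw [← pow_succ, Nat.sub_add_cancel hn, h]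
  have hval : γ + γ ^ (n - 1) = -(55 / 32) := by
    rw [hpow, hγ, inv_div]
    field_simp
    linear_combination (32 * (α + β) - 768) * hsum + (-(55:ℂ)/32 - 2) * 32 * hab + 1760 * hs - 1760 * (Real.sqrt 119 : ℂ)^2 * hI
  have hint2 : IsIntegral ℤ ((-(55 / 32) : ℂ)) := hval ▸ hint.add (hint.pow _)
  have hq : IsIntegral ℤ ((-(55 / 32) : ℚ)) := by
    have : algebraMap ℚ ℂ (-(55 / 32)) = (-(55 / 32) : ℂ) := by
      simp [Rat.cast_def]; norm_num
    rw [← isIntegral_algebraMap_iff (algebraMap ℚ ℂ).injective, this]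
    exact hint2
  obtain ⟨y, hy⟩ := IsIntegrallyClosed.isIntegral_iff.mp hq
  have : (32 : ℚ) * (y : ℚ) = -55 := by
    rw [show ((y:ℚ)) = algebraMap ℤ ℚ y from rfl, hy]; norm_num
  have hz : (32 : ℤ) * y = -55 := by exact_mod_cast this
  omega
end

section
/- Let (u_n)_{n≥1} be a sequence of nonzero integers such that u_t | u_n whenever t | n, and such that there exists n₀ with the property that for every n > n₀, u_n has a prime divisor not dividing u_1 ⋯ u_{n-1} (a primitive divisor). Then for all n > n₀, the number of distinct prime divisors of u_n satisfies ω(u_n) ≥ d(n) - n₀, where d(n) is the number of divisors of n. -/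
/-- If (u_n) is a sequence of nonzero integers with u_t ∣ u_n whenever t ∣ n, and for every
n > n₀ the term u_n has a primitive prime divisor (a prime dividing u_n but none of
u_1, …, u_{n-1}), then for all n > n₀ one has ω(u_n) ≥ d(n) - n₀. -/
theorem stmt6 (u : ℕ → ℤ) (hune : ∀ n : ℕ, 1 ≤ n → u n ≠ 0)
    (hdvd : ∀ t n : ℕ, 1 ≤ t → t ∣ n → u t ∣ u n) (n₀ : ℕ)
    (hprim : ∀ n : ℕ, n₀ < n → ∃ p : ℕ, p.Prime ∧ (p : ℤ) ∣ u n ∧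
      ¬ (p : ℤ) ∣ ∏ i ∈ Finset.Icc 1 (n - 1), u i) :
    ∀ n : ℕ, n₀ < n →
      (n.divisors.card : ℤ) - (n₀ : ℤ) ≤ ((u n).natAbs.primeFactors.card : ℤ) := by
  intro n hn
  classical
  -- choose primitive primes
  choose p hp hpd hpnd using hprim
  set S : Finset ℕ := n.divisors.filter (fun t => n₀ < t) with hS
  have hnpos : 0 < n := lt_of_le_of_lt (Nat.zero_le _) hn
  -- each chosen prime divides u n and is a prime factor
  have hmap : ∀ t ∈ S, ∀ ht : n₀ < t, p t ht ∈ (u n).natAbs.primeFactors := by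
    intro t htS ht
    have htd : t ∣ n := (Nat.mem_divisors.mp (Finset.mem_filter.mp htS).1).1
    have ht1 : 1 ≤ t := Nat.pos_of_dvd_of_pos htd hnpos
    have : (p t ht : ℤ) ∣ u n := (hpd t ht).trans (hdvd t n ht1 htd)
    rw [Nat.mem_primeFactors]
    refine ⟨hp t ht, ?_, ?_⟩
    · exact Int.natCast_dvd_natCast.mp (by simpa [Int.natAbs_dvd_natAbs] using this)
    · simpa using hune n hnpos
  -- key: if p divides u s for some 1 ≤ s < t, contradiction with hpnd
  have hinj : ∀ t₁ ∈ S, ∀ t₂ ∈ S, ∀ h₁ : n₀ < t₁, ∀ h₂ : n₀ < t₂,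
      p t₁ h₁ = p t₂ h₂ → t₁ = t₂ := by
    intro t₁ h₁S t₂ h₂S h₁ h₂ heq
    by_contra hne
    wlog hlt : t₁ < t₂ generalizing t₁ t₂
    · exact this t₂ h₂S t₁ h₁S h₂ h₁ heq.symm (Ne.symm hne)
        (lt_of_le_of_ne (not_lt.mp hlt) (Ne.symm hne))
    have ht1 : 1 ≤ t₁ := Nat.pos_of_dvd_of_pos (Nat.mem_divisors.mp
      (Finset.mem_filter.mp h₁S).1).1 hnpos
    have hmem : t₁ ∈ Finset.Icc 1 (t₂ - 1) :=
      Finset.mem_Icc.mpr ⟨ht1, Nat.le_sub_one_of_lt hlt⟩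
    have : (p t₂ h₂ : ℤ) ∣ ∏ i ∈ Finset.Icc 1 (t₂ - 1), u i := by
      have : (p t₂ h₂ : ℤ) ∣ u t₁ := heq ▸ hpd t₁ h₁
      exact this.trans (Finset.dvd_prod_of_mem u hmem)
    exact hpnd t₂ h₂ this
  -- card S ≤ ω(u n)
  have hcardS : S.card ≤ (u n).natAbs.primeFactors.card := by
    apply Finset.card_le_card_of_injOn (fun t => if h : n₀ < t then p t h else 0)
    · intro t htS
      have ht : n₀ < t := (Finset.mem_filter.mp htS).2
      simpa [ht] using hmap t htS ht
    · intro t₁ h₁S t₂ h₂S heq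
      have ht₁ : n₀ < t₁ := (Finset.mem_filter.mp h₁S).2
      have ht₂ : n₀ < t₂ := (Finset.mem_filter.mp h₂S).2
      simp only [dif_pos ht₁, dif_pos ht₂] at heq
      exact hinj t₁ h₁S t₂ h₂S ht₁ ht₂ heq
  -- divisors ≤ n₀ contribute at most n₀
  have hsmall : (n.divisors.filter (fun t => ¬ n₀ < t)).card ≤ n₀ := by
    calc (n.divisors.filter (fun t => ¬ n₀ < t)).card
        ≤ (Finset.Icc 1 n₀).card := by
          apply Finset.card_le_card
          intro t ht
          obtain ⟨ht₁, ht₂⟩ := Finset.mem_filter.mp ht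
          exact Finset.mem_Icc.mpr ⟨Nat.pos_of_dvd_of_pos (Nat.mem_divisors.mp ht₁).1 hnpos,
            not_lt.mp ht₂⟩
      _ = n₀ := by simp
  have hfe : (n.divisors.filter (fun t => n₀ < t)).card = S.card := by rw [hS]
  have hsplit : n.divisors.card ≤ S.card + n₀ := by
    have := Nat.le_of_eq (Finset.card_filter_add_card_filter_not
      (s := n.divisors) (p := fun t => n₀ < t)).symm
    omega
  have := hcardS
  omega
end

section
/- For every ε > 0, for all sufficiently large r, the primorial n = ∏_{q ≤ r, q prime} q satisfies d(n) = 2^{π(r)} ≥ 2^{(1-ε)·(log n)/(log log n)}, where d is the divisor-counting function and π is the prime-counting function. -/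
/-!
The primorial `n = r#` is squarefree with the primes `≤ r` as prime factors, so
`d(n) = 2 ^ π(r)`. For the inequality write `log n = θ(r)`. Chebyshev's lower bound
`θ(r) ≥ c r` (any `c < log 2`) gives `log θ(r) ≥ (1 - ε) log r` for large `r`, and
`θ(r) ≤ π(r) log r` then yields `(1 - ε) θ(r) / log θ(r) ≤ θ(r) / log r ≤ π(r)`.
-/

open Finset Filter Asymptotics Real Chebyshev
open scoped Nat.Prime

theorem Nat.card_divisors_of_squarefree {n : ℕ} (hn : Squarefree n) :
    #n.divisors = 2 ^ #n.primeFactors := by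
  rw [Nat.card_divisors hn.ne_zero, ← prod_const]
  refine prod_congr rfl fun p hp => ?_
  rw [Nat.factorization_eq_one_of_squarefree hn (Nat.prime_of_mem_primeFactors hp)
    (Nat.dvd_of_mem_primeFactors hp)]

theorem Nat.card_divisors_primorial (n : ℕ) :
    #(primorial n).divisors = 2 ^ #(Nat.primesLE n) := by
  rw [Nat.card_divisors_of_squarefree (squarefree_primorial n), primeFactors_primorial]

theorem Chebyshev.theta_natCast_eq_log_prod_primesLE (n : ℕ) :
    θ n = log (∏ p ∈ Nat.primesLE n, (p : ℝ)) := by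
  rw [theta_eq_log_primorial, Nat.floor_natCast, primorial_eq_prod_primesLE, Nat.cast_prod]

theorem Chebyshev.isLittleO_theta_lower_bound_error :
    (fun x : ℝ => log (x + 1) + 2 * √x * log x) =o[atTop] id := by
  have hlog_succ : (fun x : ℝ => log (x + 1)) =o[atTop] id :=
    (isLittleO_log_id_atTop.comp_tendsto (tendsto_atTop_add_const_right _ 1 tendsto_id)
      ).trans_isBigO ((isBigO_refl _ _).add (isLittleO_const_id_atTop (1 : ℝ)).isBigO)
  have hsqrt_mul_log : (fun x : ℝ => √x * log x) =o[atTop] id := by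
    refine ((isBigO_refl (fun x : ℝ => √x) atTop).mul_isLittleO
      (isLittleO_log_rpow_atTop one_half_pos)).trans_eventuallyEq ?_
    filter_upwards [eventually_ge_atTop 0] with x hx
    rw [sqrt_eq_rpow, ← rpow_add' hx (by norm_num)]
    norm_num
  simpa only [mul_assoc] using hlog_succ.add (hsqrt_mul_log.const_mul_left 2)

theorem Chebyshev.eventually_mul_le_theta {c : ℝ} (hc : c < log 2) :
    ∀ᶠ n : ℕ in atTop, c * n ≤ θ n := by
  have hbound := isLittleO_theta_lower_bound_error.bound (sub_pos.2 hc)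
  filter_upwards [tendsto_natCast_atTop_atTop.eventually hbound] with n hn
  rw [norm_eq_abs, id, norm_of_nonneg n.cast_nonneg] at hn
  linarith [theta_ge n, le_abs_self (log ((n : ℝ) + 1) + 2 * √n * log n)]

theorem Chebyshev.eventually_mul_log_le_log_theta {δ : ℝ} (hδ : δ < 1) :
    ∀ᶠ n : ℕ in atTop, δ * log n ≤ log (θ n) := by
  have hlog2 : 0 < log 2 := log_pos one_lt_two
  set c := log 2 / 2
  have hc : 0 < c := half_pos hlog2
  have hlog : Tendsto (fun n : ℕ => (1 - δ) * log n) atTop atTop :=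
    (tendsto_log_atTop.comp tendsto_natCast_atTop_atTop).const_mul_atTop (sub_pos.2 hδ)
  filter_upwards [eventually_mul_le_theta (half_lt_self hlog2),
    hlog.eventually_ge_atTop (-log c), eventually_gt_atTop 0] with n hθ hn hn0
  have hn0' : (0 : ℝ) < n := by exact_mod_cast hn0
  calc δ * log n = log c + log n - ((1 - δ) * log n + log c) := by ring
    _ ≤ log c + log n := by linarith
    _ = log (c * n) := (log_mul hc.ne' hn0'.ne').symm
    _ ≤ log (θ n) := log_le_log (by positivity) hθ

theorem Chebyshev.eventually_mul_theta_div_log_theta_le_primeCounting {δ : ℝ} (hδ : δ < 1) :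
    ∀ᶠ n : ℕ in atTop, δ * θ n / log (θ n) ≤ π n := by
  filter_upwards [eventually_mul_log_le_log_theta (δ := 1 / 2) (by norm_num),
    eventually_mul_log_le_log_theta hδ, eventually_ge_atTop 2] with n hhalf hδn hn
  have hlogn : 0 < log n := log_pos (by exact_mod_cast hn)
  have hlogθ : 0 < log (θ n) := by linarith
  have hθ := theta_le_pi_mul_log n
  have hπ : (0 : ℝ) ≤ π n := n.primeCounting.cast_nonneg
  rw [div_le_iff₀ hlogθ]
  rcases le_or_gt δ 0 with hδ0 | hδ0
  · nlinarith [theta_nonneg n]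
  · nlinarith

/-- For every ε > 0 and all sufficiently large r, the primorial n = ∏_{q ≤ r prime} q
satisfies d(n) = 2^{π(r)} and 2^{π(r)} ≥ 2^{(1-ε)(log n)/(log log n)}. -/
theorem stmt7 (ε : ℝ) (hε : 0 < ε) :
    ∃ R : ℕ, ∀ r : ℕ, R ≤ r →
      (((∏ q ∈ (Finset.range (r + 1)).filter Nat.Prime, q).divisors.card)
          = 2 ^ ((Finset.range (r + 1)).filter Nat.Prime).card) ∧
      ((2 : ℝ) ^ (((Finset.range (r + 1)).filter Nat.Prime).card : ℝ) ≥
        (2 : ℝ) ^ ((1 - ε) *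
          Real.log (∏ q ∈ (Finset.range (r + 1)).filter Nat.Prime, q) /
          Real.log (Real.log (∏ q ∈ (Finset.range (r + 1)).filter Nat.Prime, q)))) := by
  obtain ⟨R, hR⟩ := eventually_atTop.1 <|
    eventually_mul_theta_div_log_theta_le_primeCounting (sub_lt_self 1 hε)
  refine ⟨R, fun r hr => ⟨Nat.card_divisors_primorial r, ?_⟩⟩
  simp only [← Nat.primesLE_eq_filter_range, ← theta_natCast_eq_log_prod_primesLE,
    Nat.primesLE_card_eq_primeCounting, ge_iff_le]
  exact (rpow_le_rpow_left_iff one_lt_two).2 (hR r hr)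
end

section
/- Assume Frey's ABC-conjecture for the number field K: for every ε > 0 and nonzero ideal 𝔞 ⊆ O_K there is a constant c such that for all A, B ∈ O_K∖{0} generating 𝔞, max{h_K(A), h_K(B), h_K(A-B)} ≤ (1+ε) log ∏_{𝔭 | AB(A-B)} N_K(𝔭) + c. Then for coprime nonzero A, B ∈ O_K with A/B not a root of unity and h(A) ≥ h(B), one has Q_K(Aⁿ - Bⁿ) ≥ (e^{-c}/Q_K(AB)) · e^{(1-ε)[K:ℚ] h(A) n} for all n ≥ 1. -/
open NumberField

/-- The denominator ideal of x ∈ K: the ideal of algebraic integers a with a·x integral.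
Its absolute norm is ∏_𝔭 N(𝔭)^{max(0, -ν_𝔭(x))}. -/
noncomputable def denIdeal {K : Type*} [Field K] [NumberField K] (x : K) : Ideal (𝓞 K) where
  carrier := {a | ∃ b : 𝓞 K, (a : K) * x = (b : K)}
  add_mem' := by
    rintro a b ⟨c, hc⟩ ⟨d, hd⟩
    exact ⟨c + d, by push_cast; rw [add_mul, hc, hd]⟩
  zero_mem' := ⟨0, by simp⟩
  smul_mem' := by
    rintro r a ⟨c, hc⟩
    exact ⟨r * c, by push_cast [smul_eq_mul]; rw [mul_assoc, hc]⟩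

/-- The absolute logarithmic Weil height of x ∈ K:
h(x) = (1/[K:ℚ]) (Σ_{σ : K↪ℂ} log⁺|σ(x)| + Σ_𝔭 max{0, -ν_𝔭(x)} log N(𝔭)). -/
noncomputable def logHeight (K : Type*) [Field K] [NumberField K] (x : K) : ℝ :=
  (Module.finrank ℚ K : ℝ)⁻¹ *
    ((∑ σ : K →+* ℂ, Real.log (max 1 ‖σ x‖)) +
      Real.log (Ideal.absNorm (denIdeal x)))

section helpers
variable {K : Type*} [Field K] [NumberField K]

lemma denIdeal_int (a : 𝓞 K) : denIdeal (a : K) = ⊤ := by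
  rw [Ideal.eq_top_iff_one]
  exact ⟨a, by push_cast; rw [one_mul]⟩

lemma max_one_pow {t : ℝ} (ht : 0 ≤ t) (n : ℕ) : max 1 (t ^ n) = (max 1 t) ^ n := by
  rcases le_total t 1 with h | h
  · rw [max_eq_left (pow_le_one₀ ht h), max_eq_left h, one_pow]
  · rw [max_eq_right (one_le_pow₀ h), max_eq_right h]

lemma logHeight_int_pow (a : 𝓞 K) (n : ℕ) :
    logHeight K ((a : K) ^ n) = n * logHeight K (a : K) := by
  have h1 : ((a : K) ^ n) = ((a ^ n : 𝓞 K) : K) := by push_cast; ring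
  unfold logHeight
  rw [h1, denIdeal_int, denIdeal_int]
  simp only [Ideal.absNorm_top, Nat.cast_one, Real.log_one, add_zero]
  rw [mul_comm (n : ℝ), mul_assoc]
  congr 1
  rw [Finset.sum_mul]
  apply Finset.sum_congr rfl
  intro σ _
  rw [← h1, map_pow, norm_pow, max_one_pow (norm_nonneg _), Real.log_pow, mul_comm]

lemma logHeight_int_nonneg (a : 𝓞 K) : 0 ≤ logHeight K (a : K) := by
  unfold logHeight
  apply mul_nonneg (by positivity)
  apply add_nonneg
  · exact Finset.sum_nonneg fun σ _ => Real.log_nonneg (le_max_left _ _)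
  · rw [denIdeal_int]; simp

lemma rad_ne_bot {x : 𝓞 K} (hx : x ≠ 0) : (Ideal.span {x}).radical ≠ ⊥ := by
  intro h
  have : Ideal.span {x} ≤ ⊥ := h ▸ Ideal.le_radical
  rw [le_bot_iff, Ideal.span_singleton_eq_bot] at this
  exact hx this

lemma rad_norm_pos {x : 𝓞 K} (hx : x ≠ 0) :
    0 < Ideal.absNorm (Ideal.span {x}).radical :=
  Nat.pos_of_ne_zero fun h => rad_ne_bot hx (Ideal.absNorm_eq_zero_iff.mp h)

set_option synthInstance.maxHeartbeats 400000 in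
lemma key_norm_le (u v : 𝓞 K) (hu : u ≠ 0) (hv : v ≠ 0) {n : ℕ} (hn : n ≠ 0) :
    Ideal.absNorm ((Ideal.span {u ^ n * v}).radical) ≤
      Ideal.absNorm ((Ideal.span {u}).radical) * Ideal.absNorm ((Ideal.span {v}).radical) := by
  have h2 : (Ideal.span {u ^ n * v}).radical =
      (Ideal.span {u}).radical ⊓ (Ideal.span {v}).radical := by
    rw [← Ideal.span_singleton_mul_span_singleton, ← Ideal.span_singleton_pow,
      Ideal.radical_mul, Ideal.radical_pow _ hn]
  have hle : (Ideal.span {u}).radical * (Ideal.span {v}).radical ≤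
      (Ideal.span {u ^ n * v}).radical := h2 ▸ Ideal.mul_le_inf
  have hdvd := Ideal.absNorm_dvd_absNorm_of_le hle
  rw [map_mul] at hdvd
  exact Nat.le_of_dvd (Nat.mul_pos (rad_norm_pos hu) (rad_norm_pos hv)) hdvd

end helpers

/-- Assuming Frey's refined ABC-conjecture for the number field K, for coprime nonzero
A, B ∈ O_K with A/B not a root of unity and h(A) ≥ h(B), one has
Q_K(Aⁿ - Bⁿ) ≥ (e^{-c}/Q_K(AB))·e^{(1-ε)[K:ℚ]h(A)n} for all n ≥ 1.  Here
h_K = [K:ℚ]·h and Q_K(α) is the absolute norm of the radical of αO_K. -/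
theorem stmt17 (K : Type*) [Field K] [NumberField K]
    (hFrey : ∀ ε : ℝ, 0 < ε → ∀ 𝔞 : Ideal (𝓞 K), 𝔞 ≠ ⊥ → ∃ c : ℝ,
      ∀ A B : 𝓞 K, A ≠ 0 → B ≠ 0 → Ideal.span {A} ⊔ Ideal.span {B} = 𝔞 →
        max (max ((Module.finrank ℚ K : ℝ) * logHeight K (A : K))
              ((Module.finrank ℚ K : ℝ) * logHeight K (B : K)))
            ((Module.finrank ℚ K : ℝ) * logHeight K ((A : K) - (B : K))) ≤
          (1 + ε) * Real.log (Ideal.absNorm ((Ideal.span {A * B * (A - B)}).radical)) + c) :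
    ∀ ε : ℝ, 0 < ε → ∃ c : ℝ,
      ∀ A B : 𝓞 K, A ≠ 0 → B ≠ 0 →
        Ideal.span {A} ⊔ Ideal.span {B} = (⊤ : Ideal (𝓞 K)) →
        (∀ m : ℕ, 0 < m → ((A : K) / (B : K)) ^ m ≠ 1) →
        logHeight K (B : K) ≤ logHeight K (A : K) →
        ∀ n : ℕ, 1 ≤ n →
          Real.exp (-c) / (Ideal.absNorm ((Ideal.span {A * B}).radical) : ℝ) *
              Real.exp ((1 - ε) * (Module.finrank ℚ K : ℝ) * logHeight K (A : K) * n) ≤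
            (Ideal.absNorm ((Ideal.span {A ^ n - B ^ n}).radical) : ℝ) := by
  intro ε hε
  obtain ⟨c, hc⟩ := hFrey ε hε ⊤ (by simp)
  refine ⟨|c|, ?_⟩
  intro A B hA hB hcop hroot _ n hn
  have hn0 : n ≠ 0 := by omega
  set d : ℝ := (Module.finrank ℚ K : ℝ) with hd
  have hd0 : (0:ℝ) ≤ d := Nat.cast_nonneg _
  have hh : 0 ≤ logHeight K (A : K) := logHeight_int_nonneg A
  -- coprimality of powers
  have hsup : Ideal.span {A ^ n} ⊔ Ideal.span {B ^ n} = ⊤ := by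
    rw [← Ideal.span_singleton_pow, ← Ideal.span_singleton_pow]
    exact ((Ideal.isCoprime_iff_sup_eq.mpr hcop).pow).sup_eq
  have hfrey := hc (A ^ n) (B ^ n) (pow_ne_zero n hA) (pow_ne_zero n hB) hsup
  have hmax : d * logHeight K ((A ^ n : 𝓞 K) : K) ≤
      (1 + ε) * Real.log (Ideal.absNorm ((Ideal.span {A ^ n * B ^ n * (A ^ n - B ^ n)}).radical))
        + c :=
    le_trans (le_trans (le_max_left _ _) (le_max_left _ _)) hfrey
  have hcast : ((A ^ n : 𝓞 K) : K) = (A : K) ^ n := by push_cast; ring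
  rw [hcast, logHeight_int_pow] at hmax
  -- A^n - B^n ≠ 0
  have hBK : (B : K) ≠ 0 := fun h => hB (by exact_mod_cast h)
  have hDne : A ^ n - B ^ n ≠ 0 := by
    intro h0
    apply hroot n (by omega)
    rw [sub_eq_zero] at h0
    have hK : (A : K) ^ n = (B : K) ^ n := by
      have := congrArg (fun x : 𝓞 K => (x : K)) h0
      push_cast at this
      exact this
    rw [div_pow, hK, div_self (pow_ne_zero n hBK)]
  have hABne : A * B ≠ 0 := mul_ne_zero hA hB
  have hbig : A ^ n * B ^ n * (A ^ n - B ^ n) = (A * B) ^ n * (A ^ n - B ^ n) := by ring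
  rw [hbig] at hmax
  set QAB : ℕ := Ideal.absNorm ((Ideal.span {A * B}).radical) with hQABdef
  set QD : ℕ := Ideal.absNorm ((Ideal.span {A ^ n - B ^ n}).radical) with hQDdef
  have hQABpos : 0 < QAB := rad_norm_pos hABne
  have hQDpos : 0 < QD := rad_norm_pos hDne
  have hkey := key_norm_le (A * B) (A ^ n - B ^ n) hABne hDne hn0
  have hlog : Real.log (Ideal.absNorm ((Ideal.span {(A*B) ^ n * (A ^ n - B ^ n)}).radical) : ℕ)
      ≤ Real.log QAB + Real.log QD := by
    have hbigpos : 0 < Ideal.absNorm ((Ideal.span {(A*B) ^ n * (A ^ n - B ^ n)}).radical) :=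
      rad_norm_pos (mul_ne_zero (pow_ne_zero _ hABne) hDne)
    rw [← Real.log_mul (by exact_mod_cast hQABpos.ne') (by exact_mod_cast hQDpos.ne')]
    apply Real.log_le_log (by exact_mod_cast hbigpos)
    exact_mod_cast hkey
  have hmax2 : d * (n * logHeight K (A : K)) ≤
      (1 + ε) * (Real.log QAB + Real.log QD) + c := by
    calc d * (n * logHeight K (A : K)) ≤ _ := hmax
    _ ≤ (1 + ε) * (Real.log QAB + Real.log QD) + c := by
        have h1ε : (0:ℝ) < 1 + ε := by linarith
        nlinarith [hlog]
  -- convert goal to exp comparison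
  have hQABr : (QAB : ℝ) = Real.exp (Real.log QAB) :=
    (Real.exp_log (by exact_mod_cast hQABpos)).symm
  have hQDr : (QD : ℝ) = Real.exp (Real.log QD) :=
    (Real.exp_log (by exact_mod_cast hQDpos)).symm
  rw [hQDr, hQABr, ← Real.exp_sub, ← Real.exp_add]
  apply Real.exp_le_exp.mpr
  set L := Real.log (QAB : ℕ)
  set X := Real.log (QD : ℕ)
  have hL : 0 ≤ L := Real.log_nonneg (by exact_mod_cast hQABpos)
  have hX : 0 ≤ X := Real.log_nonneg (by exact_mod_cast hQDpos)
  -- goal : -|c| - L + (1-ε)*d*h*n ≤ X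
  have habs : c ≤ |c| := le_abs_self c
  have h0c : 0 ≤ |c| := abs_nonneg c
  have ht : 0 ≤ d * logHeight K (A : K) * (n : ℝ) := by positivity
  have h1ε : (0:ℝ) < 1 + ε := by linarith
  have hstep : (1 + ε) * (-|c| - L + (1 - ε) * d * logHeight K (A : K) * n) ≤ (1 + ε) * X := by
    nlinarith [hmax2, mul_nonneg hε.le h0c, mul_nonneg (mul_nonneg (sq_nonneg ε) hd0)
      (mul_nonneg hh (Nat.cast_nonneg n)), mul_nonneg hε.le hL]
  have := (mul_le_mul_iff_right₀ h1ε).mp hstep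
  linarith
end
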